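/- Let k = p^a q^b l with gcd(l, pq) = 1, 0 ≤ a ≤ m−1, 0 ≤ b ≤ n−1, and set ζ_q = β^{p^{m+a} q^{n−1}} (a primitive q-th root of unity). Then for all 1 ≤ j ≤ n: S_0^{(0,j)}(β^k) = q^{j−1}(q−1)/2 (as an element of F_{4^{d*}}) if j ≤ b; S_0^{(0,j)}(β^k) = Σ_{t ∈ D_0^{(q)}} ζ_q^{lt} if j = b+1; and S_0^{(0,j)}(β^k) = 0 if j > b+1. -/

import Mathlib

open Finset Polynomial

noncomputable section

/-- The field `F₄` with four elements. -/
abbrev F4 : Type := GaloisField 2 2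

/-- Generic generalized cyclotomic class of index `0` modulo `M`:
`{ g^(2t) * y^k mod M : 0 ≤ t < dHalf, 0 ≤ k < e }`. -/
def GC0 (g y M dHalf e : ℕ) : Finset ℕ :=
  ((Finset.range dHalf) ×ˢ (Finset.range e)).image
    (fun tk => g ^ (2 * tk.1) * y ^ tk.2 % M)

/-- Generic generalized cyclotomic class of index `1` modulo `M`: `g · GC0 (mod M)`. -/
def GC1 (g y M dHalf e : ℕ) : Finset ℕ :=
  (GC0 g y M dHalf e).image (fun x => g * x % M)

/-- Class of index `h ∈ {0,1}`. -/
def GC (h g y M dHalf e : ℕ) : Finset ℕ :=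
  if h = 0 then GC0 g y M dHalf e else GC1 g y M dHalf e

/-- `e_{i,j} = gcd(p^{i-1}(p-1), q^{j-1}(q-1))`. -/
def eij (p q i j : ℕ) : ℕ := Nat.gcd (p ^ (i - 1) * (p - 1)) (q ^ (j - 1) * (q - 1))

/-- `d_{i,j} = p^{i-1}(p-1) q^{j-1}(q-1) / e_{i,j}`. -/
def dij (p q i j : ℕ) : ℕ := p ^ (i - 1) * (p - 1) * (q ^ (j - 1) * (q - 1)) / eij p q i j

/-- `D_h^{(p^i q^j)}`. -/
def DPQ (p q g y h i j : ℕ) : Finset ℕ :=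
  GC h g y (p ^ i * q ^ j) (dij p q i j / 2) (eij p q i j)

/-- `D_h^{(2 p^i q^j)}`. -/
def D2PQ (p q g y h i j : ℕ) : Finset ℕ :=
  GC h g y (2 * (p ^ i * q ^ j)) (dij p q i j / 2) (eij p q i j)

/-- `D_h^{(p^i)}`. -/
def DP (p g h i : ℕ) : Finset ℕ := GC h g 1 (p ^ i) (p ^ (i - 1) * (p - 1) / 2) 1

/-- `D_h^{(2p^i)}`. -/
def D2P (p g h i : ℕ) : Finset ℕ := GC h g 1 (2 * p ^ i) (p ^ (i - 1) * (p - 1) / 2) 1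

/-- `D_h^{(q^j)}`. -/
def DQ (q g h j : ℕ) : Finset ℕ := GC h g 1 (q ^ j) (q ^ (j - 1) * (q - 1) / 2) 1

/-- `D_h^{(2q^j)}`. -/
def D2Q (q g h j : ℕ) : Finset ℕ := GC h g 1 (2 * q ^ j) (q ^ (j - 1) * (q - 1) / 2) 1

/-- `c · A`. -/
def scaled (c : ℕ) (A : Finset ℕ) : Finset ℕ := A.image (fun x => c * x)

/-- `H_h^{(p^i q^j)} = p^{m-i} q^{n-j} D_h^{(p^i q^j)}`. -/
def HPQ (p q m n g y h i j : ℕ) : Finset ℕ :=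
  scaled (p ^ (m - i) * q ^ (n - j)) (DPQ p q g y h i j)

/-- `H_h^{(2 p^i q^j)} = p^{m-i} q^{n-j} D_h^{(2 p^i q^j)}`. -/
def H2PQ (p q m n g y h i j : ℕ) : Finset ℕ :=
  scaled (p ^ (m - i) * q ^ (n - j)) (D2PQ p q g y h i j)

/-- `H_h^{(p^i)} = p^{m-i} q^n D_h^{(p^i)}`. -/
def HP (p q m n g h i : ℕ) : Finset ℕ := scaled (p ^ (m - i) * q ^ n) (DP p g h i)

/-- `H_h^{(2p^i)} = p^{m-i} q^n D_h^{(2p^i)}`. -/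
def H2P (p q m n g h i : ℕ) : Finset ℕ := scaled (p ^ (m - i) * q ^ n) (D2P p g h i)

/-- `H_h^{(q^j)} = p^m q^{n-j} D_h^{(q^j)}`. -/
def HQ (p q m n g h j : ℕ) : Finset ℕ := scaled (p ^ m * q ^ (n - j)) (DQ q g h j)

/-- `H_h^{(2q^j)} = p^m q^{n-j} D_h^{(2q^j)}`. -/
def H2Q (p q m n g h j : ℕ) : Finset ℕ := scaled (p ^ m * q ^ (n - j)) (D2Q q g h j)

/-- `⋃_{i,j} H_h^{(2p^i q^j)} ∪ ⋃_i H_h^{(2p^i)} ∪ ⋃_j H_h^{(2q^j)}`. -/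
def UnionH (p q m n g y h : ℕ) : Finset ℕ :=
  ((Finset.Icc 1 m).biUnion fun i => (Finset.Icc 1 n).biUnion fun j => H2PQ p q m n g y h i j)
    ∪ ((Finset.Icc 1 m).biUnion fun i => H2P p q m n g h i)
    ∪ ((Finset.Icc 1 n).biUnion fun j => H2Q p q m n g h j)

/-- `⋃_{i,j} 2H_h^{(p^i q^j)} ∪ ⋃_i 2H_h^{(p^i)} ∪ ⋃_j 2H_h^{(q^j)}`. -/
def Union2H (p q m n g y h : ℕ) : Finset ℕ :=
  ((Finset.Icc 1 m).biUnion fun i =>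
      (Finset.Icc 1 n).biUnion fun j => scaled 2 (HPQ p q m n g y h i j))
    ∪ ((Finset.Icc 1 m).biUnion fun i => scaled 2 (HP p q m n g h i))
    ∪ ((Finset.Icc 1 n).biUnion fun j => scaled 2 (HQ p q m n g h j))

/-- The quaternary generalized cyclotomic sequence of period `2 p^m q^n`. -/
def seqS (p q m n g y : ℕ) (a b c d e : F4) (u : ℕ) : F4 :=
  let v := u % (2 * (p ^ m * q ^ n))
  if v = 0 then 0
  else if v = p ^ m * q ^ n then e
  else if v ∈ UnionH p q m n g y 0 then a
  else if v ∈ UnionH p q m n g y 1 then b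
  else if v ∈ Union2H p q m n g y 0 then c
  else if v ∈ Union2H p q m n g y 1 then d
  else 0

/-- The generating polynomial `S(x) = ∑_{u=0}^{2p^m q^n - 1} s_u x^u ∈ F₄[x]`. -/
def genPoly (p q m n g y : ℕ) (a b c d e : F4) : Polynomial F4 :=
  ∑ u ∈ Finset.range (2 * (p ^ m * q ^ n)),
    Polynomial.C (seqS p q m n g y a b c d e u) * Polynomial.X ^ u

/-- The linear complexity of a sequence over a field: the least `L > 0` admitting a linear
recurrence `s_{u+L} = c_1 s_{u+L-1} + ⋯ + c_L s_u`. -/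
def LinearComplexity {F : Type*} [Field F] (s : ℕ → F) : ℕ :=
  sInf {L | 0 < L ∧ ∃ c : Fin L → F,
    ∀ u, s (u + L) = ∑ i : Fin L, c i * s (u + L - 1 - (i : ℕ))}

/-!
Rescaling turns the sum over `H_0^{(2q^j)}` into `∑_{t < φ(q^j)/2} ζ^{g^{2t}}` with
`ζ = β^{k p^m q^{n-j}}`, which is `1` for `j ≤ b` and a primitive `q^s`-th root of unity,
`s = j - b`, otherwise. In the latter case the summand has period `φ(q^s)/2` in `t`, so the sum
is `q^b = 1` (characteristic 2) times the sum of `ζ` over the squares of `(ℤ/q^s)ˣ`. For `s = 1`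
this is the period on the right-hand side. For `s ≥ 2` write `g^{φ(q^{s-1})} = 1 + v` with
`q^{s-1} ∥ v`: since `(1+v)^c ≡ 1 + cv (mod q^s)`, the squares split into orbits
`c ↦ (1+v)^c a` of length `q` along which `ζ` runs through a geometric progression with ratio
`ζ^{va} ≠ 1`, `(ζ^{va})^q = 1`, so each orbit contributes zero.
-/

open scoped Nat

theorem Finset.sum_range_mul_eq_sum_sum {M : Type*} [AddCommMonoid M] (f : ℕ → M) (c P : ℕ) :
    ∑ t ∈ range (c * P), f t = ∑ i ∈ range c, ∑ r ∈ range P, f (i * P + r) := by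
  induction c with
  | zero => simp
  | succ c ih => rw [Nat.succ_mul, sum_range_add, ih, sum_range_succ]

theorem Function.Periodic.sum_range_mul {M : Type*} [AddCommMonoid M] {f : ℕ → M} {P : ℕ}
    (hf : Function.Periodic f P) (c : ℕ) :
    ∑ t ∈ range (c * P), f t = c • ∑ t ∈ range P, f t := by
  have hshift (i r : ℕ) : f (i * P + r) = f r := by rw [add_comm]; exact hf.nat_mul i r
  simp only [Finset.sum_range_mul_eq_sum_sum, hshift, sum_const, card_range]

theorem Nat.ModEq.one_add_pow {N v : ℕ} (hv : N ∣ v ^ 2) (c : ℕ) :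
    (1 + v) ^ c ≡ 1 + c * v [MOD N] := by
  induction c with
  | zero => simp [Nat.ModEq.refl]
  | succ c ih =>
    calc (1 + v) ^ (c + 1) ≡ (1 + c * v) * (1 + v) [MOD N] := by
          rw [pow_succ]; exact ih.mul_right _
      _ = 1 + (c + 1) * v + c * v ^ 2 := by ring
      _ ≡ 1 + (c + 1) * v + c * 0 [MOD N] :=
        Nat.ModEq.add_left _ ((Nat.modEq_zero_iff_dvd.mpr hv).mul_left c)
      _ = 1 + (c + 1) * v := by ring

theorem sum_range_pow_one_add_pow_mul_eq_zero {K : Type*} [CommRing K] [IsDomain K] {ζ : K}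
    {N q v a : ℕ} (hζ : ζ ^ N = 1) (hv : N ∣ v ^ 2) (hqv : N ∣ q * v)
    (hva : ζ ^ (v * a) ≠ 1) :
    ∑ c ∈ range q, ζ ^ ((1 + v) ^ c * a) = 0 := by
  have hterm (c : ℕ) : ζ ^ ((1 + v) ^ c * a) = ζ ^ a * (ζ ^ (v * a)) ^ c := by
    rw [pow_eq_pow_of_modEq ((Nat.ModEq.one_add_pow hv c).mul_right a) hζ, ← pow_mul,
      ← pow_add]
    ring_nf
  have hzq : (ζ ^ (v * a)) ^ q = 1 := by
    obtain ⟨e, he⟩ := hqv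
    rw [← pow_mul, show v * a * q = q * v * a by ring, he, mul_assoc, pow_mul, hζ, one_pow]
  have hgeom := geom_sum_mul (ζ ^ (v * a)) q
  rw [hzq, sub_self, mul_eq_zero] at hgeom
  simp only [hterm, ← mul_sum, hgeom.resolve_right (sub_ne_zero.mpr hva), mul_zero]

theorem IsPrimitiveRoot.pow_mul_pow_sub_mul {K : Type*} [CommMonoid K] {β : K} {a q n d e : ℕ}
    (hβ : IsPrimitiveRoot β (a * q ^ n)) (ha : a ≠ 0) (hq : q ≠ 0) (hdn : d ≤ n)
    (he : e.Coprime q) : IsPrimitiveRoot (β ^ (a * q ^ (n - d) * e)) (q ^ d) := by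
  have hsplit : a * q ^ n = a * q ^ (n - d) * q ^ d := by
    rw [mul_assoc, ← pow_add, Nat.sub_add_cancel hdn]
  have h := hβ.pow_of_dvd (mul_ne_zero ha (pow_ne_zero _ hq)) ⟨q ^ d, hsplit⟩
  rw [hsplit, Nat.mul_div_cancel_left _ (by positivity)] at h
  rw [pow_mul]
  exact h.pow_of_coprime e (he.pow_right d)

theorem pow_pow_sub_eq_one_of_le {K : Type*} [CommMonoid K] {β : K} {p q m n A B l j : ℕ}
    (hβ : IsPrimitiveRoot β (p ^ m * q ^ n)) (hjB : j ≤ B) :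
    (β ^ (p ^ A * q ^ B * l)) ^ (p ^ m * q ^ (n - j)) = 1 := by
  rw [← pow_mul, hβ.pow_eq_one_iff_dvd, show p ^ A * q ^ B * l * (p ^ m * q ^ (n - j))
    = p ^ m * q ^ (B + (n - j)) * (p ^ A * l) by rw [pow_add]; ring]
  exact dvd_mul_of_dvd_left (mul_dvd_mul_left _ (pow_dvd_pow q (by omega))) _

theorem isPrimitiveRoot_pow_pow_sub {K : Type*} [CommMonoid K] {β : K} {p q m n A B l s : ℕ}
    (hβ : IsPrimitiveRoot β (p ^ m * q ^ n)) (hp : p.Prime) (hq : q.Prime) (hpq : p ≠ q)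
    (hl : Nat.gcd l (p * q) = 1) (hsn : B + s ≤ n) :
    IsPrimitiveRoot ((β ^ (p ^ A * q ^ B * l)) ^ (p ^ m * q ^ (n - (B + s)))) (q ^ s) := by
  rw [← pow_mul, show p ^ A * q ^ B * l * (p ^ m * q ^ (n - (B + s)))
    = p ^ m * q ^ (n - s) * (p ^ A * l) by
      rw [show n - s = B + (n - (B + s)) by omega, pow_add]; ring]
  refine hβ.pow_mul_pow_sub_mul (pow_ne_zero m hp.ne_zero) hq.ne_zero (by omega) ?_
  exact .mul_left (.pow_left A ((Nat.coprime_primes hp hq).mpr hpq))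
    (Nat.Coprime.coprime_dvd_right (dvd_mul_left q p) hl)

theorem two_eq_zero_of_card_eq_four_pow {K : Type*} [Field K] [Fintype K] {d : ℕ}
    (h : Fintype.card K = 4 ^ d) : (2 : K) = 0 := by
  have hd : d ≠ 0 := by
    rintro rfl
    exact (Fintype.one_lt_card (α := K)).ne' (by simpa using h)
  have h4 := FiniteField.cast_card_eq_zero K
  rw [h, Nat.cast_pow, Nat.cast_ofNat, pow_eq_zero_iff hd] at h4
  exact mul_self_eq_zero.mp (by rw [← h4]; norm_num)

theorem Nat.Coprime.of_orderOf_natCast_eq_totient {g M : ℕ} [NeZero M]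
    (h : orderOf (g : ZMod M) = φ M) : g.Coprime M :=
  (ZMod.isUnit_iff_coprime g M).mp
    (orderOf_pos_iff.mp (h ▸ Nat.totient_pos.mpr (NeZero.pos M))).isUnit

theorem Nat.pow_add_mul_pred_div_two {q : ℕ} (hq : q.Prime) (hq2 : q ≠ 2) (B s : ℕ) :
    q ^ (B + s) * (q - 1) / 2 = q ^ B * (φ (q ^ (s + 1)) / 2) := by
  rw [Nat.totient_prime_pow_succ hq, pow_add, mul_assoc,
    Nat.mul_div_assoc _ ((hq.even_sub_one hq2).two_dvd.mul_left _)]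

theorem periodic_pow_pow_two_mul {K : Type*} [Monoid K] {ζ : K} {L g P : ℕ} (hζ : ζ ^ L = 1)
    (hg : g ^ (2 * P) ≡ 1 [MOD L]) : Function.Periodic (fun t => ζ ^ g ^ (2 * t)) P := by
  intro t
  refine pow_eq_pow_of_modEq ?_ hζ
  rw [mul_add, pow_add]
  simpa using hg.mul_left (g ^ (2 * t))

theorem sum_range_mul_half_totient {K : Type*} [CommSemiring K] {ζ : K} {q s g : ℕ} (c : ℕ)
    (hq : q.Prime) (hq2 : q ≠ 2) (hζ : ζ ^ q ^ (s + 1) = 1) (hg : g.Coprime q) :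
    ∑ t ∈ range (c * (φ (q ^ (s + 1)) / 2)), ζ ^ g ^ (2 * t)
      = c • ∑ t ∈ range (φ (q ^ (s + 1)) / 2), ζ ^ g ^ (2 * t) := by
  refine (periodic_pow_pow_two_mul hζ ?_).sum_range_mul c
  have heven : Even (φ (q ^ (s + 1))) :=
    Nat.totient_even (lt_of_lt_of_le (lt_of_le_of_ne hq.two_le hq2.symm)
      (Nat.le_self_pow (Nat.succ_ne_zero s) q))
  rw [Nat.mul_div_cancel' heven.two_dvd]
  exact Nat.ModEq.pow_totient (hg.pow_right _)

theorem exists_pow_totient_eq_one_add {q s g : ℕ} (hq : q.Prime) (hs : s ≠ 0)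
    (hg : orderOf (g : ZMod (q ^ (s + 1))) = φ (q ^ (s + 1))) :
    ∃ v, g ^ φ (q ^ s) = 1 + v ∧ q ^ s ∣ v ∧ ¬ q ^ (s + 1) ∣ v := by
  have : NeZero (q ^ (s + 1)) := ⟨pow_ne_zero _ hq.ne_zero⟩
  have hcop := Nat.Coprime.of_orderOf_natCast_eq_totient hg
  have hg0 : g ≠ 0 := by
    rintro rfl
    exact (Nat.one_lt_pow (Nat.succ_ne_zero s) hq.one_lt).ne' (Nat.coprime_zero_left _ |>.mp hcop)
  have hone : 1 ≤ g ^ φ (q ^ s) := Nat.one_le_pow _ _ (Nat.pos_of_ne_zero hg0)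
  refine ⟨g ^ φ (q ^ s) - 1, by omega, ?_, fun hdvd => ?_⟩
  · exact (Nat.modEq_iff_dvd' hone).mp
      (Nat.ModEq.pow_totient (hcop.coprime_dvd_right (pow_dvd_pow q s.le_succ))).symm
  · have hpow : (g : ZMod (q ^ (s + 1))) ^ φ (q ^ s) = 1 := by
      exact_mod_cast (ZMod.natCast_eq_natCast_iff _ _ _).mpr
        ((Nat.modEq_iff_dvd' hone).mpr hdvd).symm
    have hle := Nat.le_of_dvd (Nat.totient_pos.mpr (by positivity [hq.pos]))
      (hg ▸ orderOf_dvd_of_pow_eq_one hpow)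
    rw [pow_succ', Nat.totient_mul_of_prime_of_dvd hq (dvd_pow_self q hs)] at hle
    have := Nat.totient_pos.mpr (pow_pos hq.pos s)
    nlinarith [hq.two_le]

theorem sum_range_half_totient_pow_pow_eq_zero {K : Type*} [CommRing K] [IsDomain K] {ζ : K}
    {q s g : ℕ} (hq : q.Prime) (hq2 : q ≠ 2) (hs : s ≠ 0)
    (hζ : IsPrimitiveRoot ζ (q ^ (s + 1)))
    (hg : orderOf (g : ZMod (q ^ (s + 1))) = φ (q ^ (s + 1))) :
    ∑ t ∈ range (φ (q ^ (s + 1)) / 2), ζ ^ g ^ (2 * t) = 0 := by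
  have : NeZero (q ^ (s + 1)) := ⟨pow_ne_zero _ hq.ne_zero⟩
  obtain ⟨v, huv, hv, hv'⟩ := exists_pow_totient_eq_one_add hq hs hg
  have hcop := Nat.Coprime.of_orderOf_natCast_eq_totient hg
  have heven : Even (φ (q ^ s)) :=
    Nat.totient_even (lt_of_lt_of_le (lt_of_le_of_ne hq.two_le hq2.symm)
      (Nat.le_self_pow hs q))
  have hP : φ (q ^ (s + 1)) / 2 = q * (φ (q ^ s) / 2) := by
    rw [pow_succ', Nat.totient_mul_of_prime_of_dvd hq (dvd_pow_self q hs),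
      Nat.mul_div_assoc _ heven.two_dvd]
  rw [hP, sum_range_mul_eq_sum_sum, sum_comm]
  refine sum_eq_zero fun r _ => ?_
  set P := φ (q ^ s) / 2
  have h2P : 2 * P = φ (q ^ s) := Nat.mul_div_cancel' heven.two_dvd
  have hpow (i : ℕ) : g ^ (2 * (i * P + r)) = (1 + v) ^ i * g ^ (2 * r) := by
    rw [← huv, ← h2P, ← pow_mul, ← pow_add]
    ring_nf
  simp only [hpow]
  refine sum_range_pow_one_add_pow_mul_eq_zero hζ.pow_eq_one ?_ ?_ ?_
  · exact (pow_dvd_pow q (by omega)).trans (pow_mul q s 2 ▸ pow_dvd_pow_of_dvd hv 2)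
  · exact pow_succ' q s ▸ mul_dvd_mul_left q hv
  · rw [Ne, hζ.pow_eq_one_iff_dvd]
    exact fun h => hv' ((hcop.pow_left _).symm.dvd_of_dvd_mul_right h)

theorem sum_GC0_one_eq {M : Type*} [AddCommMonoid M] (f : ℕ → M) {g L N : ℕ}
    (h : 2 * N ≤ orderOf (g : ZMod L)) :
    ∑ x ∈ GC0 g 1 L N 1, f x = ∑ t ∈ range N, f (g ^ (2 * t) % L) := by
  unfold GC0
  rw [sum_image, sum_product]
  · simp
  intro x hx y hy hxy
  simp only [coe_product, coe_range, Set.mem_prod, Set.mem_Iio, Nat.lt_one_iff] at hx hy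
  simp only [one_pow, mul_one] at hxy
  have hcast : (g : ZMod L) ^ (2 * x.1) = (g : ZMod L) ^ (2 * y.1) := by
    exact_mod_cast (ZMod.natCast_eq_natCast_iff' _ _ _).mpr hxy
  have := pow_injOn_Iio_orderOf (Set.mem_Iio.mpr (by omega)) (Set.mem_Iio.mpr (by omega)) hcast
  exact Prod.ext (by omega) (hx.2.trans hy.2.symm)

theorem sum_DQ_zero_eq {M : Type*} [AddCommMonoid M] (f : ℕ → M) {q g j : ℕ} (hq : q.Prime)
    (hj : j ≠ 0) (hg : orderOf (g : ZMod (q ^ j)) = φ (q ^ j)) :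
    ∑ x ∈ DQ q g 0 j, f x
      = ∑ t ∈ range (q ^ (j - 1) * (q - 1) / 2), f (g ^ (2 * t) % q ^ j) := by
  refine sum_GC0_one_eq f ?_
  rw [hg, Nat.totient_prime_pow hq (Nat.pos_of_ne_zero hj)]
  exact Nat.mul_div_le _ 2

theorem sum_D2Q_zero_eq {M : Type*} [AddCommMonoid M] (f : ℕ → M) {q g j : ℕ} (hq : q.Prime)
    (hq2 : q ≠ 2) (hj : j ≠ 0) (hg : orderOf (g : ZMod (2 * q ^ j)) = φ (2 * q ^ j)) :
    ∑ x ∈ D2Q q g 0 j, f x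
      = ∑ t ∈ range (q ^ (j - 1) * (q - 1) / 2), f (g ^ (2 * t) % (2 * q ^ j)) := by
  refine sum_GC0_one_eq f ?_
  have h2q : Nat.Coprime 2 (q ^ j) :=
    .pow_right j ((Nat.coprime_primes Nat.prime_two hq).mpr hq2.symm)
  rw [hg, Nat.totient_mul h2q, Nat.totient_two, one_mul,
    Nat.totient_prime_pow hq (Nat.pos_of_ne_zero hj)]
  exact Nat.mul_div_le _ 2

theorem sum_H2Q_zero_eq {K : Type*} [CommSemiring K] (ξ : K) {p q m n g j : ℕ} (hp : p ≠ 0)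
    (hq : q.Prime) (hq2 : q ≠ 2) (hj : j ≠ 0) (hjn : j ≤ n)
    (hg : orderOf (g : ZMod (2 * q ^ j)) = φ (2 * q ^ j)) (hξ : ξ ^ (p ^ m * q ^ n) = 1) :
    ∑ t ∈ H2Q p q m n g 0 j, ξ ^ t
      = ∑ t ∈ range (q ^ (j - 1) * (q - 1) / 2),
          (ξ ^ (p ^ m * q ^ (n - j))) ^ (g ^ (2 * t)) := by
  have hc : 0 < p ^ m * q ^ (n - j) := by positivity [hq.pos]
  have hperiod : (ξ ^ (p ^ m * q ^ (n - j))) ^ (2 * q ^ j) = 1 := by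
    rw [← pow_mul, show p ^ m * q ^ (n - j) * (2 * q ^ j) = p ^ m * (q ^ (n - j) * q ^ j) * 2 by
      ring, ← pow_add, Nat.sub_add_cancel hjn, pow_mul, hξ, one_pow]
  unfold H2Q scaled
  rw [sum_image fun x _ y _ hxy => Nat.eq_of_mul_eq_mul_left hc hxy,
    sum_D2Q_zero_eq _ hq hq2 hj hg]
  refine sum_congr rfl fun t _ => ?_
  rw [pow_mul, ← pow_eq_pow_mod _ hperiod]

theorem statement8_general
    (p q m n g : ℕ)
    (hp : p.Prime) (hq : q.Prime) (hpq : p ≠ q) (hqodd : Odd q)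
    (hgq : ∀ j, 1 ≤ j → j ≤ n → orderOf (g : ZMod (q ^ j)) = Nat.totient (q ^ j))
    (hg2q : ∀ j, 1 ≤ j → j ≤ n → orderOf (g : ZMod (2 * q ^ j)) = Nat.totient (2 * q ^ j))
    (K : Type*) [Field K] [Fintype K]
    (hK : Fintype.card K = 4 ^ orderOf (4 : ZMod (p ^ m * q ^ n)))
    (β : K) (hβ : IsPrimitiveRoot β (p ^ m * q ^ n))
    (A B l : ℕ) (hl : Nat.gcd l (p * q) = 1)
    : ∀ j, 1 ≤ j → j ≤ n →
      ((j ≤ B →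
          ∑ t ∈ H2Q p q m n g 0 j, (β ^ (p ^ A * q ^ B * l)) ^ t
            = ((q ^ (j - 1) * (q - 1) / 2 : ℕ) : K)) ∧
        (j = B + 1 →
          ∑ t ∈ H2Q p q m n g 0 j, (β ^ (p ^ A * q ^ B * l)) ^ t
            = ∑ t ∈ DQ q g 0 1, (β ^ (p ^ (m + A) * q ^ (n - 1))) ^ (l * t)) ∧
        (B + 1 < j →
          ∑ t ∈ H2Q p q m n g 0 j, (β ^ (p ^ A * q ^ B * l)) ^ t = 0)) := by
  intro j hj1 hjn
  have hq2 : q ≠ 2 := by rintro rfl; exact absurd hqodd (by decide)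
  have hβk : (β ^ (p ^ A * q ^ B * l)) ^ (p ^ m * q ^ n) = 1 := by
    rw [← pow_mul, mul_comm, pow_mul, hβ.pow_eq_one, one_pow]
  rw [sum_H2Q_zero_eq _ hp.ne_zero hq hq2 (by omega) hjn (hg2q j hj1 hjn) hβk]
  rcases le_or_gt j B with hjB | hBj
  · exact ⟨fun _ => by simp [pow_pow_sub_eq_one_of_le hβ hjB], fun _ => by omega,
      fun _ => by omega⟩
  obtain ⟨s, rfl⟩ : ∃ s, j = B + (s + 1) := ⟨j - B - 1, by omega⟩
  have hgs := hgq (s + 1) (by omega) (by omega)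
  have hζ := isPrimitiveRoot_pow_pow_sub (A := A) (l := l) hβ hp hq hpq hl hjn
  have : NeZero q := ⟨hq.ne_zero⟩
  have hg : g.Coprime q := (Nat.Coprime.of_orderOf_natCast_eq_totient hgs).coprime_dvd_right
    (dvd_pow_self q s.succ_ne_zero)
  rw [show B + (s + 1) - 1 = B + s by omega, Nat.pow_add_mul_pred_div_two hq hq2,
    sum_range_mul_half_totient _ hq hq2 hζ.pow_eq_one hg]
  refine ⟨fun _ => by omega, fun hs => ?_, fun hs => ?_⟩
  · obtain rfl : s = 0 := by omega
    have hq1 : (q : K) = 1 :=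
      natCast_eq_one_of_odd_of_two_eq_zero hqodd (two_eq_zero_of_card_eq_four_pow hK)
    have hγ : (β ^ (p ^ (m + A) * q ^ (n - 1))) ^ l
        = (β ^ (p ^ A * q ^ B * l)) ^ (p ^ m * q ^ (n - (B + (0 + 1)))) := by
      rw [← pow_mul, ← pow_mul, show n - 1 = B + (n - (B + (0 + 1))) by omega, pow_add, pow_add]
      ring_nf
    rw [nsmul_eq_mul, Nat.cast_pow, hq1, one_pow, one_mul, sum_DQ_zero_eq _ hq one_ne_zero hgs,
      Nat.totient_prime_pow_succ hq]
    refine sum_congr rfl fun t _ => ?_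
    rw [pow_mul _ l, hγ]
    exact pow_eq_pow_mod _ hζ.pow_eq_one
  · rw [sum_range_half_totient_pow_pow_eq_zero hq hq2 (by omega) hζ hgs, smul_zero]

theorem statement8
    (p q m n g y : ℕ)
    (hp : p.Prime) (hq : q.Prime) (hpq : p ≠ q) (hpodd : Odd p) (hqodd : Odd q)
    (hm : 1 ≤ m) (hn : 1 ≤ n) (hgodd : Odd g)
    (hgp : ∀ i, 1 ≤ i → i ≤ m → orderOf (g : ZMod (p ^ i)) = Nat.totient (p ^ i))
    (hg2p : ∀ i, 1 ≤ i → i ≤ m → orderOf (g : ZMod (2 * p ^ i)) = Nat.totient (2 * p ^ i))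
    (hgq : ∀ j, 1 ≤ j → j ≤ n → orderOf (g : ZMod (q ^ j)) = Nat.totient (q ^ j))
    (hg2q : ∀ j, 1 ≤ j → j ≤ n → orderOf (g : ZMod (2 * q ^ j)) = Nat.totient (2 * q ^ j))
    (hylt : y < 2 * (p ^ m * q ^ n))
    (hyg : y ≡ g [MOD 2 * p ^ m]) (hy1 : y ≡ 1 [MOD 2 * q ^ n])
    (K : Type*) [Field K] [Fintype K]
    (hK : Fintype.card K = 4 ^ orderOf (4 : ZMod (p ^ m * q ^ n)))
    (β : K) (hβ : IsPrimitiveRoot β (p ^ m * q ^ n))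
    (A B l : ℕ) (hA : A ≤ m - 1) (hB : B ≤ n - 1) (hl : Nat.gcd l (p * q) = 1)
    : ∀ j, 1 ≤ j → j ≤ n →
      ((j ≤ B →
          ∑ t ∈ H2Q p q m n g 0 j, (β ^ (p ^ A * q ^ B * l)) ^ t
            = ((q ^ (j - 1) * (q - 1) / 2 : ℕ) : K)) ∧
        (j = B + 1 →
          ∑ t ∈ H2Q p q m n g 0 j, (β ^ (p ^ A * q ^ B * l)) ^ t
            = ∑ t ∈ DQ q g 0 1, (β ^ (p ^ (m + A) * q ^ (n - 1))) ^ (l * t)) ∧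
        (B + 1 < j →
          ∑ t ∈ H2Q p q m n g 0 j, (β ^ (p ^ A * q ^ B * l)) ^ t = 0)) :=
  statement8_general p q m n g hp hq hpq hqodd hgq hg2q K hK β hβ A B l hl

end
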